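/- (Theorem 3.5, exactness of the ℓ1 penalty) There exists β̄ > 0 such that for every β ≥ β̄ the optimal solution sets coincide: S_β^opt = S^opt; i.e., z minimizes f_β over Ω if and only if z minimizes f over the complementarity-feasible set F. -/

import Mathlib

noncomputable section

/-- Dot product on `ℝ^m`. -/
def dotp {m : ℕ} (x y : Fin m → ℝ) : ℝ := ∑ k, x k * y k

/-- The ℓ₁ penalty term `p(z) = Σ_{i<j} ⟨x_i, x_j⟩`. -/
def pen {n m : ℕ} (z : Fin n → Fin m → ℝ) : ℝ :=
  ∑ i : Fin n, ∑ j : Fin n, if i < j then dotp (z i) (z j) else 0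

/-- `f` is multi-affine: affine in each block when the others are fixed. -/
def MultiAffine {n m : ℕ} (f : (Fin n → Fin m → ℝ) → ℝ) : Prop :=
  ∀ (i : Fin n) (z : Fin n → Fin m → ℝ) (x y : Fin m → ℝ) (t : ℝ),
    f (Function.update z i (t • x + (1 - t) • y)) =
      t * f (Function.update z i x) + (1 - t) * f (Function.update z i y)

/-- Membership in `Ω = Ω₁⁺ × ⋯ × Ωₙ⁺`. -/
def InOmega {n m : ℕ} (Om : Fin n → Set (Fin m → ℝ)) (z : Fin n → Fin m → ℝ) : Prop :=
  ∀ i, z i ∈ Om i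

/-- Feasibility for (P): `z ∈ Ω` and `⟨x_i, x_j⟩ = 0` for all `i ≠ j`. -/
def Feas {n m : ℕ} (Om : Fin n → Set (Fin m → ℝ)) (z : Fin n → Fin m → ℝ) : Prop :=
  InOmega Om z ∧ ∀ i j, i ≠ j → dotp (z i) (z j) = 0

/-- `S^opt`: global minimizers of `f` over the feasible region of (P). -/
def SOpt {n m : ℕ} (Om : Fin n → Set (Fin m → ℝ)) (f : (Fin n → Fin m → ℝ) → ℝ) :
    Set (Fin n → Fin m → ℝ) :=
  {z | Feas Om z ∧ ∀ w, Feas Om w → f z ≤ f w}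

/-- `S_β^opt`: global minimizers of `f_β = f + β p` over `Ω`. -/
def SBeta {n m : ℕ} (Om : Fin n → Set (Fin m → ℝ)) (f : (Fin n → Fin m → ℝ) → ℝ) (β : ℝ) :
    Set (Fin n → Fin m → ℝ) :=
  {z | InOmega Om z ∧ ∀ w, InOmega Om w → f z + β * pen z ≤ f w + β * pen w}

/-!
The penalized objective `f + β p` is again multi-affine, so on the product `Ω` of polytopes it
is minimized at a tuple of vertices. There are finitely many such tuples, and at each one that
violates complementarity the penalty `p` is strictly positive, so a single `β₀` makes `f + β₀ p`
there at least the value of `f` at a fixed feasible point. Hence every value of `f + β₀ p` on `Ω`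
dominates a value of `f` on `F`; for `β > β₀` this forces every minimizer of `f + β p` to have
`p = 0`, i.e. to be feasible, and the two minimization problems then coincide.
-/

lemma dotp_eq_dotProduct {m : ℕ} (x y : Fin m → ℝ) : dotp x y = x ⬝ᵥ y := rfl

lemma dotp_comm {m : ℕ} (x y : Fin m → ℝ) : dotp x y = dotp y x := dotProduct_comm x y

lemma dotp_nonneg {m : ℕ} {x y : Fin m → ℝ} (hx : 0 ≤ x) (hy : 0 ≤ y) : 0 ≤ dotp x y :=
  dotProduct_nonneg_of_nonneg hx hy

lemma dotp_smul_add_smul_left {m : ℕ} (x y w : Fin m → ℝ) (t : ℝ) :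
    dotp (t • x + (1 - t) • y) w = t * dotp x w + (1 - t) * dotp y w := by
  simp only [dotp_eq_dotProduct, add_dotProduct, smul_dotProduct, smul_eq_mul]

namespace MultiAffine

variable {n m : ℕ}

lemma const (c : ℝ) : MultiAffine (fun _ : Fin n → Fin m → ℝ => c) := by
  intro i z x y t
  ring

lemma add {f g : (Fin n → Fin m → ℝ) → ℝ} (hf : MultiAffine f) (hg : MultiAffine g) :
    MultiAffine (fun z => f z + g z) := by
  intro i z x y t
  simp only [hf i z x y t, hg i z x y t]
  ring

lemma const_mul {f : (Fin n → Fin m → ℝ) → ℝ} (c : ℝ) (hf : MultiAffine f) :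
    MultiAffine (fun z => c * f z) := by
  intro i z x y t
  simp only [hf i z x y t]
  ring

lemma sum {ι : Type*} (s : Finset ι) {f : ι → (Fin n → Fin m → ℝ) → ℝ}
    (hf : ∀ a ∈ s, MultiAffine (f a)) : MultiAffine (fun z => ∑ a ∈ s, f a z) := by
  induction s using Finset.cons_induction with
  | empty => simpa using const 0
  | cons a s ha ih =>
    simp only [Finset.sum_cons]
    exact (hf a (s.mem_cons_self a)).add (ih fun b hb => hf b (Finset.mem_cons_of_mem hb))

lemma dotp_apply {i j : Fin n} (hij : i ≠ j) :
    MultiAffine (fun z : Fin n → Fin m → ℝ => dotp (z i) (z j)) := by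
  intro k z x y t
  by_cases hki : k = i
  · subst hki
    simp only [Function.update_self, Function.update_of_ne hij.symm, dotp_smul_add_smul_left]
  by_cases hkj : k = j
  · subst hkj
    simp only [Function.update_self, Function.update_of_ne hij, dotp_comm (z i),
      dotp_smul_add_smul_left]
  · simp only [Function.update_of_ne (Ne.symm hki), Function.update_of_ne (Ne.symm hkj)]
    ring

lemma concaveOn_update {f : (Fin n → Fin m → ℝ) → ℝ} (hf : MultiAffine f) (i : Fin n)
    (z : Fin n → Fin m → ℝ) : ConcaveOn ℝ Set.univ (fun x => f (Function.update z i x)) := by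
  refine ⟨convex_univ, fun x _ y _ a b _ _ hab => ?_⟩
  obtain rfl : b = 1 - a := by linarith
  simp only [hf i z x y a, smul_eq_mul, le_refl]

/-- Minimum principle, applied one block at a time. -/
lemma exists_le_of_forall_mem_convexHull {f : (Fin n → Fin m → ℝ) → ℝ} (hf : MultiAffine f)
    {S : Fin n → Set (Fin m → ℝ)} {z : Fin n → Fin m → ℝ}
    (hz : ∀ i, z i ∈ convexHull ℝ (S i)) : ∃ v, (∀ i, v i ∈ S i) ∧ f v ≤ f z := by
  suffices ∀ s : Finset (Fin n), ∃ v, (∀ i, v i ∈ convexHull ℝ (S i)) ∧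
      (∀ i ∈ s, v i ∈ S i) ∧ f v ≤ f z by
    obtain ⟨v, -, hvS, hvz⟩ := this Finset.univ
    exact ⟨v, fun i => hvS i (Finset.mem_univ i), hvz⟩
  intro s
  induction s using Finset.induction_on with
  | empty => exact ⟨z, hz, by simp, le_rfl⟩
  | @insert i s _ ih =>
    obtain ⟨v, hvhull, hvS, hvz⟩ := ih
    obtain ⟨w, hwS, hwv⟩ :=
      (hf.concaveOn_update i v).exists_le_of_mem_convexHull (Set.subset_univ _) (hvhull i)
    refine ⟨Function.update v i w, fun j => ?_, fun j hj => ?_, ?_⟩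
    · rcases eq_or_ne j i with rfl | hji
      · simpa using subset_convexHull ℝ _ hwS
      · simpa [hji] using hvhull j
    · rcases eq_or_ne j i with rfl | hji
      · simpa using hwS
      · simpa [hji] using hvS j ((Finset.mem_insert.1 hj).resolve_left hji)
    · calc f (Function.update v i w) ≤ f (Function.update v i (v i)) := hwv
        _ = f v := by rw [Function.update_eq_self]
        _ ≤ f z := hvz

end MultiAffine

section Penalty

variable {n m : ℕ}

lemma multiAffine_pen : MultiAffine (pen (n := n) (m := m)) := by
  refine MultiAffine.sum _ fun i _ => MultiAffine.sum _ fun j _ => ?_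
  split_ifs with hij
  · exact MultiAffine.dotp_apply hij.ne
  · exact MultiAffine.const 0

lemma pen_summand_nonneg {z : Fin n → Fin m → ℝ} (hz : 0 ≤ z) (i j : Fin n) :
    0 ≤ if i < j then dotp (z i) (z j) else 0 := by
  split_ifs
  · exact dotp_nonneg (hz i) (hz j)
  · exact le_rfl

lemma pen_nonneg {z : Fin n → Fin m → ℝ} (hz : 0 ≤ z) : 0 ≤ pen z :=
  Finset.sum_nonneg fun i _ => Finset.sum_nonneg fun j _ => pen_summand_nonneg hz i j

lemma pen_eq_zero_iff {z : Fin n → Fin m → ℝ} (hz : 0 ≤ z) :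
    pen z = 0 ↔ ∀ i j, i ≠ j → dotp (z i) (z j) = 0 := by
  have hsum {g : Fin n → ℝ} (hg : 0 ≤ g) : ∑ a, g a = 0 ↔ ∀ a, g a = 0 :=
    (Fintype.sum_eq_zero_iff_of_nonneg hg).trans funext_iff
  have hrow (i : Fin n) := hsum (pen_summand_nonneg hz i)
  rw [pen, hsum fun i => Finset.sum_nonneg fun j _ => pen_summand_nonneg hz i j]
  simp only [hrow, ite_eq_right_iff]
  refine ⟨fun h i j hij => ?_, fun h i j hij => h i j hij.ne⟩
  rcases hij.lt_or_gt with hlt | hgt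
  · exact h i j hlt
  · rw [dotp_comm]
    exact h j i hgt

variable {Om : Fin n → Set (Fin m → ℝ)}

lemma InOmega.nonneg (hnonneg : ∀ i, ∀ x ∈ Om i, ∀ k, 0 ≤ x k) {z : Fin n → Fin m → ℝ}
    (hz : InOmega Om z) : 0 ≤ z :=
  fun i k => hnonneg i (z i) (hz i) k

lemma Feas.pen_eq_zero {z : Fin n → Fin m → ℝ} (hnonneg : ∀ i, ∀ x ∈ Om i, ∀ k, 0 ≤ x k)
    (hz : Feas Om z) : pen z = 0 :=
  (pen_eq_zero_iff (hz.1.nonneg hnonneg)).2 hz.2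

lemma feas_of_pen_eq_zero {z : Fin n → Fin m → ℝ} (hnonneg : ∀ i, ∀ x ∈ Om i, ∀ k, 0 ≤ x k)
    (hz : InOmega Om z) (hpen : pen z = 0) : Feas Om z :=
  ⟨hz, (pen_eq_zero_iff (hz.nonneg hnonneg)).1 hpen⟩

lemma sBeta_eq_sOpt {f : (Fin n → Fin m → ℝ) → ℝ} {β₀ β : ℝ}
    (hnonneg : ∀ i, ∀ x ∈ Om i, ∀ k, 0 ≤ x k) (hβ : β₀ < β)
    (hdom : ∀ z, InOmega Om z → ∃ w, Feas Om w ∧ f w ≤ f z + β₀ * pen z) :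
    SBeta Om f β = SOpt Om f := by
  ext z
  constructor
  · rintro ⟨hz, hzmin⟩
    obtain ⟨w, hw, hwz⟩ := hdom z hz
    have hwmin := hzmin w hw.1
    rw [hw.pen_eq_zero hnonneg, mul_zero, add_zero] at hwmin
    have hpen : pen z = 0 := by nlinarith [pen_nonneg (hz.nonneg hnonneg)]
    refine ⟨feas_of_pen_eq_zero hnonneg hz hpen, fun u hu => ?_⟩
    simpa [hpen, hu.pen_eq_zero hnonneg] using hzmin u hu.1
  · rintro ⟨hz, hzmin⟩
    refine ⟨hz.1, fun u hu => ?_⟩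
    obtain ⟨w, hw, hwu⟩ := hdom u hu
    have := pen_nonneg (hu.nonneg hnonneg)
    rw [hz.pen_eq_zero hnonneg, mul_zero, add_zero]
    nlinarith [hzmin w hw]

/-- Pass to a tuple of hull generators not increasing `f + β p`: there either complementarity
holds, or the penalty is positive and `hβ` applies. -/
lemma exists_feas_le_penalized {f : (Fin n → Fin m → ℝ) → ℝ} {E : Fin n → Set (Fin m → ℝ)}
    {u : Fin n → Fin m → ℝ} {β : ℝ} (hnonneg : ∀ i, ∀ x ∈ Om i, ∀ k, 0 ≤ x k)
    (hE : ∀ i, E i ⊆ Om i) (hOm : ∀ i, Om i ⊆ convexHull ℝ (E i)) (hf : MultiAffine f)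
    (hu : Feas Om u) (hβ : ∀ v, (∀ i, v i ∈ E i) → 0 < pen v → f u ≤ f v + β * pen v)
    {z : Fin n → Fin m → ℝ} (hz : InOmega Om z) :
    ∃ w, Feas Om w ∧ f w ≤ f z + β * pen z := by
  obtain ⟨v, hvE, hvz⟩ :=
    (hf.add (multiAffine_pen.const_mul β)).exists_le_of_forall_mem_convexHull fun i => hOm i (hz i)
  have hv : InOmega Om v := fun i => hE i (hvE i)
  rcases (pen_nonneg (hv.nonneg hnonneg)).eq_or_lt with hpen | hpen
  · refine ⟨v, feas_of_pen_eq_zero hnonneg hv hpen.symm, ?_⟩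
    simpa [← hpen] using hvz
  · exact ⟨u, hu, (hβ v hvE hpen).trans hvz⟩

end Penalty

lemma subset_convexHull_extremePoints {E : Type*} [AddCommGroup E] [Module ℝ E]
    [TopologicalSpace E] [T2Space E] [IsTopologicalAddGroup E] [ContinuousSMul ℝ E]
    [LocallyConvexSpace ℝ E] {s : Set E} (hs : IsCompact s) (hconv : Convex ℝ s)
    (hfin : (s.extremePoints ℝ).Finite) : s ⊆ convexHull ℝ (s.extremePoints ℝ) := by
  conv_lhs => rw [← closure_convexHull_extremePoints hs hconv,
    (hfin.isCompact_convexHull ℝ).isClosed.closure_eq]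

lemma Set.Finite.exists_le_add_mul {α : Type*} {s : Set α} (hs : s.Finite) (c : ℝ)
    (g p : α → ℝ) : ∃ β₀, ∀ β ≥ β₀, ∀ v ∈ s, 0 < p v → c ≤ g v + β * p v := by
  obtain ⟨β₀, hβ₀⟩ := (hs.image fun v => (c - g v) / p v).bddAbove
  refine ⟨β₀, fun β hβ v hv hp => ?_⟩
  have : (c - g v) / p v ≤ β := (hβ₀ ⟨v, hv, rfl⟩).trans hβ
  rw [div_le_iff₀ hp] at this
  linarith

theorem exact_penalty_general (n m : ℕ)
    (Om : Fin n → Set (Fin m → ℝ))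
    (hcpt : ∀ i, IsCompact (Om i))
    (hcvx : ∀ i, Convex ℝ (Om i))
    (hnonneg : ∀ i, ∀ x ∈ Om i, ∀ k, 0 ≤ x k)
    (hfin : ∀ i, (Set.extremePoints ℝ (Om i)).Finite)
    (f : (Fin n → Fin m → ℝ) → ℝ) (hf : MultiAffine f)
    (hFne : ∃ z, Feas Om z) :
    ∃ βbar : ℝ, 0 < βbar ∧ ∀ β ≥ βbar, SBeta Om f β = SOpt Om f := by
  obtain ⟨u, hu⟩ := hFne
  obtain ⟨β₀, hβ₀⟩ :=
    (Set.Finite.pi (t := fun i => (Om i).extremePoints ℝ) hfin).exists_le_add_mul (f u) f pen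
  have hdom (z) (hz : InOmega Om z) : ∃ w, Feas Om w ∧ f w ≤ f z + max β₀ 0 * pen z :=
    exists_feas_le_penalized hnonneg (fun i => extremePoints_subset)
      (fun i => subset_convexHull_extremePoints (hcpt i) (hcvx i) (hfin i)) hf hu
      (fun v hv hpen => hβ₀ _ (le_max_left _ _) v (fun i _ => hv i) hpen) hz
  exact ⟨max β₀ 0 + 1, by positivity, fun β hβ => sBeta_eq_sOpt hnonneg (by linarith) hdom⟩

/-- **Theorem 3.5** (exactness of the ℓ₁ penalty). There exists `β̄ > 0` such that
`S_β^opt = S^opt` for every `β ≥ β̄`. -/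
theorem exact_penalty (n m : ℕ) (hn : 2 ≤ n) (hm : 1 ≤ m)
    (Om : Fin n → Set (Fin m → ℝ))
    (hne : ∀ i, (Om i).Nonempty) (hcpt : ∀ i, IsCompact (Om i))
    (hcvx : ∀ i, Convex ℝ (Om i))
    (hnonneg : ∀ i, ∀ x ∈ Om i, ∀ k, 0 ≤ x k)
    (hfin : ∀ i, (Set.extremePoints ℝ (Om i)).Finite)
    (f : (Fin n → Fin m → ℝ) → ℝ) (hf : MultiAffine f) (hfc : Continuous f)
    (hFne : ∃ z, Feas Om z) :
    ∃ βbar : ℝ, 0 < βbar ∧ ∀ β ≥ βbar, SBeta Om f β = SOpt Om f :=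
  exact_penalty_general n m Om hcpt hcvx hnonneg hfin f hf hFne
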